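/- Let $T$ be an order bounded $f$-linear operator on $A^\sim$. Then for all $F, G \in (A^\sim)^\sim_n$, the order adjoint satisfies $G \cdot T'(F) = T'(G \cdot F)$, where $G \cdot F$ is the Arens product in $(A^\sim)^\sim_n$. -/

import Mathlib

noncomputable section

/-- Riesz space (real vector lattice) axioms, as a `Prop`-valued class. -/
class RieszSp (E : Type*) [AddCommGroup E] [Lattice E] [Module ℝ E] : Prop where
  add_le_add_left : ∀ a b : E, a ≤ b → ∀ c : E, c + a ≤ c + b
  smul_nonneg : ∀ (r : ℝ) (a : E), 0 ≤ r → 0 ≤ a → 0 ≤ r • a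

/-- Archimedean (real) f-algebra axioms, as a `Prop`-valued class. -/
class FAlg (A : Type*) [CommRing A] [Lattice A] [Module ℝ A] extends RieszSp A : Prop where
  mul_nonneg : ∀ a b : A, 0 ≤ a → 0 ≤ b → 0 ≤ a * b
  disjoint_mul : ∀ a b c : A, a ⊓ b = 0 → 0 ≤ c → (c * a) ⊓ b = 0
  archimedean : ∀ a b : A, (∀ n : ℕ, (n : ℝ) • a ≤ b) → a ≤ 0

/-- A linear functional is order bounded if it is bounded on order intervals. -/
def OrderBddFn {E : Type*} [AddCommGroup E] [Lattice E] [Module ℝ E]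
    (φ : E →ₗ[ℝ] ℝ) : Prop :=
  ∀ a b : E, ∃ M : ℝ, ∀ x : E, a ≤ x → x ≤ b → |φ x| ≤ M

/-- A linear functional is order continuous if it sends downward directed sets with
infimum `0` to nets converging to `0`. -/
def OrdContFn {E : Type*} [AddCommGroup E] [Lattice E] [Module ℝ E]
    (φ : E →ₗ[ℝ] ℝ) : Prop :=
  ∀ s : Set E, s.Nonempty → DirectedOn (· ≥ ·) s → IsGLB s 0 →
    ∀ ε : ℝ, 0 < ε → ∃ d ∈ s, ∀ d' ∈ s, d' ≤ d → |φ d'| < ε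

/-- The data realizing `D` as the order dual `A^∼` of the f-algebra `A` (with separating
order dual) and `N` as the order continuous part `(A^∼)^∼_n` of the order bidual of `A`,
together with the Arens multiplication and its actions. -/
class DualSetting (A : Type*) [CommRing A] [Lattice A] [Module ℝ A]
    (D : Type*) [AddCommGroup D] [Lattice D] [Module ℝ D]
    (N : Type*) [CommRing N] [Lattice N] [Module ℝ N] where
  dual : D →ₗ[ℝ] A →ₗ[ℝ] ℝ
  bidual : N →ₗ[ℝ] D →ₗ[ℝ] ℝ
  dual_inj : Function.Injective dual
  bidual_inj : Function.Injective bidual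
  dual_bdd : ∀ d : D, OrderBddFn (dual d)
  dual_surj : ∀ φ : A →ₗ[ℝ] ℝ, OrderBddFn φ → ∃ d : D, dual d = φ
  dual_order : ∀ d : D, 0 ≤ d ↔ ∀ a : A, 0 ≤ a → 0 ≤ dual d a
  bidual_bdd : ∀ F : N, OrderBddFn (bidual F)
  bidual_cont : ∀ F : N, OrdContFn (bidual F)
  bidual_surj : ∀ Φ : D →ₗ[ℝ] ℝ, OrderBddFn Φ → OrdContFn Φ → ∃ F : N, bidual F = Φ
  bidual_order : ∀ F : N, 0 ≤ F ↔ ∀ d : D, 0 ≤ d → 0 ≤ bidual F d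
  separating : ∀ a : A, (∀ d : D, dual d a = 0) → a = 0
  /-- the action `f ⋅ a` of `A` on `A^∼`:  `(f ⋅ a)(b) = f (a b)` -/
  dsmul : A → D → D
  dsmul_eval : ∀ (a : A) (f : D) (b : A), dual (dsmul a f) b = dual f (a * b)
  /-- the action `F ⋅ f` of `(A^∼)^∼_n` on `A^∼`:  `(F ⋅ f)(a) = F (f ⋅ a)` -/
  nsmul : N → D → D
  nsmul_eval : ∀ (F : N) (f : D) (a : A), dual (nsmul F f) a = bidual F (dsmul a f)
  /-- the Arens product on `(A^∼)^∼_n`:  `(F * G)(f) = F (G ⋅ f)` -/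
  mul_eval : ∀ (F G : N) (f : D), bidual (F * G) f = bidual F (nsmul G f)

variable {A : Type*} [CommRing A] [Lattice A] [Module ℝ A] [FAlg A]
variable {D : Type*} [AddCommGroup D] [Lattice D] [Module ℝ D] [RieszSp D]
variable {N : Type*} [CommRing N] [Lattice N] [Module ℝ N] [FAlg N]
variable [P : DualSetting A D N]


/-- An operator on `A^∼` is order bounded if it maps order intervals into order intervals. -/
def OrderBddOp (T : D →ₗ[ℝ] D) : Prop :=
  ∀ a b : D, ∃ u v : D, ∀ x : D, a ≤ x → x ≤ b → u ≤ T x ∧ T x ≤ v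

/-- A band preserving operator: it preserves disjointness. -/
def BandPreserving (T : D →ₗ[ℝ] D) : Prop :=
  ∀ f g : D, |f| ⊓ |g| = 0 → |T f| ⊓ |g| = 0

/-- An orthomorphism is an order bounded band preserving operator. -/
def IsOrthomorphism (T : D →ₗ[ℝ] D) : Prop := OrderBddOp T ∧ BandPreserving T

/-!
The adjoint `F ↦ F ∘ T` maps `(A^∼)^∼_n` into itself because `T` is an orthomorphism and
orthomorphisms are order continuous.

*Band preservation.* Positive elements of the Arens algebra act on `A^∼` preserving
disjointness (split `G = G ⊓ n + (G - n)⁺` and use `n (G - n)⁺ ≤ G²`). Since `A^∼` is Dedekind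
complete, for disjoint `x, σ ≥ 0` the band projection onto `{x}ᵈᵈ`, composed with `1`, is an
element `0 ≤ E ≤ 1` of `(A^∼)^∼_n` with `E x = x` and `E σ = 0`; f-linearity gives
`T x = E (T x)`, which forces `|T x| ⊥ σ`.

*Order continuity.* Let `d ↓ 0` and let `e ≥ 0` lie below every eventual bound of `|T d|`. For
`u` in the net and `V` a bound of `|T|` on `[0, u]`, splitting `d = d ⊓ r u + (d - r u)⁺` shows
`e ⊓ u ≤ r V` for all `r > 0`, so `e ⊥ u`; then band preservation and the Archimedean property
give `e = 0`.

Finally `(F ∘ T) ⋅ f = F ⋅ T f`, because `T` commutes with the action of `A ⊆ (A^∼)^∼_n`, and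
this is the Arens identity `G ⋅ T'(F) = T'(G ⋅ F)`.
-/

section LatticeOrderedGroup

variable {α : Type*} [AddCommGroup α] [Lattice α] [IsOrderedAddMonoid α]

lemma inf_add_le_inf_add_inf {u v w : α} (hu : 0 ≤ u) (hv : 0 ≤ v) (hw : 0 ≤ w) :
    u ⊓ (v + w) ≤ u ⊓ v + u ⊓ w := by
  have hs : u ⊓ (v + w) - u ⊓ v ≤ u ⊓ w := by
    rw [sub_inf]
    refine sup_le (le_inf ?_ ?_) (le_inf ?_ ?_)
    · exact (sub_nonpos.2 inf_le_left).trans hu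
    · exact (sub_nonpos.2 inf_le_left).trans hw
    · exact sub_le_iff_le_add.2 (inf_le_left.trans (le_add_of_nonneg_right hv))
    · exact sub_le_iff_le_add.2 (inf_le_right.trans_eq (add_comm v w))
  exact sub_le_iff_le_add'.1 hs

lemma inf_nsmul_eq_zero {x y : α} (h : x ⊓ y = 0) (n : ℕ) : x ⊓ n • y = 0 := by
  have hx : 0 ≤ x := h ▸ inf_le_left
  have hy : 0 ≤ y := h ▸ inf_le_right
  induction n with
  | zero => simpa using hx
  | succ n ih =>
    refine le_antisymm ?_ (le_inf hx (nsmul_nonneg hy _))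
    calc x ⊓ (n + 1) • y = x ⊓ (n • y + y) := by rw [succ_nsmul]
      _ ≤ x ⊓ n • y + x ⊓ y := inf_add_le_inf_add_inf hx (nsmul_nonneg hy _) hy
      _ = 0 := by rw [ih, h, add_zero]

lemma le_of_le_add_of_inf_eq_zero {t a b σ : α} (hb : 0 ≤ b) (hab : t ≤ a + b) (htσ : t ≤ σ)
    (h : a ⊓ σ = 0) : t ≤ b := by
  have ha : 0 ≤ a := h ▸ inf_le_left
  have hσ : 0 ≤ σ := h ▸ inf_le_right
  calc t ≤ σ ⊓ (a + b) := le_inf htσ hab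
    _ ≤ σ ⊓ a + σ ⊓ b := inf_add_le_inf_add_inf hσ ha hb
    _ ≤ b := by rw [inf_comm, h, zero_add]; exact inf_le_right

lemma le_sub_inf_of_inf_eq_zero {y V c : α} (hyV : y ≤ V) (h : y ⊓ c = 0) :
    y ≤ V - V ⊓ c := by
  have hy : y ⊓ (V ⊓ c) = 0 :=
    le_antisymm (h ▸ inf_le_inf_left y inf_le_right)
      (le_inf (h ▸ inf_le_left) (h ▸ inf_le_inf_right c hyV))
  rw [le_sub_iff_add_le, ← inf_add_sup, hy, zero_add]
  exact sup_le hyV inf_le_left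

/-- The Archimedean property of Riesz spaces; Mathlib's `Archimedean` is a stronger notion that
fails for lattices such as `ℝ × ℝ`. -/
def IsArchimedeanRiesz (α : Type*) [AddCommGroup α] [Preorder α] : Prop :=
  ∀ c V : α, (∀ n : ℕ, n • c ≤ V) → c ≤ 0

lemma IsArchimedeanRiesz.eq_zero_of_le_sub_inf (harch : IsArchimedeanRiesz α) {c V : α}
    (hc : 0 ≤ c) (hV : 0 ≤ V) (h : ∀ n : ℕ, c ≤ V - V ⊓ n • c) : c = 0 := by
  refine le_antisymm (harch c V fun n => ?_) hc
  induction n with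
  | zero => simpa using hV
  | succ n ih =>
    have := h n
    rw [inf_eq_right.2 ih] at this
    rw [succ_nsmul]
    exact le_sub_iff_add_le'.1 this

lemma inf_eq_zero_of_isLUB {g c : α} {S : Set α} (hne : S.Nonempty)
    (hS : ∀ z ∈ S, g ⊓ z = 0) (hc : IsLUB S c) : g ⊓ c = 0 := by
  obtain ⟨z₀, hz₀⟩ := hne
  have hg : 0 ≤ g := hS z₀ hz₀ ▸ inf_le_left
  have hc₀ : 0 ≤ c := (hS z₀ hz₀ ▸ inf_le_right).trans (hc.1 hz₀)
  -- for disjoint positives `g + z = g ⊔ z`, so `g + c ≤ g ⊔ c`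
  have hle : c ≤ g ⊔ c - g := hc.2 fun z hz => le_sub_iff_add_le'.2 <|
    calc g + z = g ⊔ z := by rw [← inf_add_sup g z, hS z hz, zero_add]
      _ ≤ g ⊔ c := sup_le_sup_left (hc.1 hz) g
  refine le_antisymm ?_ (le_inf hg hc₀)
  have : g ⊓ c + g ⊔ c ≤ 0 + g ⊔ c := by
    rw [inf_add_sup, zero_add]; exact le_sub_iff_add_le'.1 hle
  exact le_of_add_le_add_right this

/-- For positive `x` and `y`, `InBand x y` says that `y` lies in the band `{x}ᵈᵈ` generated
by `x`. -/
def InBand (x y : α) : Prop := ∀ w : α, w ⊓ x = 0 → w ⊓ y = 0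

lemma InBand.add {x p q : α} (hp : InBand x p) (hq : InBand x q) (hp₀ : 0 ≤ p) (hq₀ : 0 ≤ q) :
    InBand x (p + q) := fun w hw => by
  have hw₀ : 0 ≤ w := hw ▸ inf_le_left
  refine le_antisymm ?_ (le_inf hw₀ (add_nonneg hp₀ hq₀))
  simpa [hp w hw, hq w hw] using inf_add_le_inf_add_inf hw₀ hp₀ hq₀

lemma InBand.eq_of_sub_inf_eq_zero {x g p q : α} (hp : InBand x p) (hq : InBand x q)
    (hp₀ : 0 ≤ p) (hq₀ : 0 ≤ q) (hpg : p ≤ g) (hqg : q ≤ g)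
    (hpx : (g - p) ⊓ x = 0) (hqx : (g - q) ⊓ x = 0) : p = q := by
  have key : ∀ p q : α, InBand x p → 0 ≤ p → 0 ≤ q → p ≤ g → q ≤ g → (g - q) ⊓ x = 0 →
      p ≤ q := by
    intro p q hp hp₀ hq₀ hpg hqg hqx
    have hx : 0 ≤ x := hqx ▸ inf_le_right
    have hd : (p - q)⁺ ≤ g - q := sup_le (sub_le_sub_right hpg q) (sub_nonneg.2 hqg)
    have hdx : (p - q)⁺ ⊓ x = 0 :=
      le_antisymm (hqx ▸ inf_le_inf_right x hd) (le_inf (posPart_nonneg _) hx)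
    have hdp : (p - q)⁺ ≤ p := sup_le (sub_le_self p hq₀) hp₀
    have : (p - q)⁺ = 0 := by rw [← inf_eq_left.2 hdp]; exact hp _ hdx
    exact sub_nonpos.1 (posPart_eq_zero.1 this)
  exact le_antisymm (key p q hp hp₀ hq₀ hpg hqg hqx) (key q p hq hq₀ hp₀ hqg hpg hpx)

end LatticeOrderedGroup

section RieszSpace

variable {E : Type*} [AddCommGroup E] [Lattice E] [Module ℝ E] [RieszSp E]

instance RieszSp.toIsOrderedAddMonoid : IsOrderedAddMonoid E where
  add_le_add_left a b h c := by simpa only [add_comm _ c] using RieszSp.add_le_add_left a b h c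

instance RieszSp.toPosSMulMono : PosSMulMono ℝ E :=
  PosSMulMono.of_smul_nonneg fun r hr x hx => RieszSp.smul_nonneg r x hr hx

lemma smul_sup_of_pos {r : ℝ} (hr : 0 < r) (x y : E) : r • (x ⊔ y) = r • x ⊔ r • y :=
  (OrderIso.smulRight (β := E) hr).map_sup x y

lemma abs_smul_of_nonneg {r : ℝ} (hr : 0 ≤ r) (x : E) : |r • x| = r • |x| := by
  rcases hr.eq_or_lt with rfl | hr
  · simp
  · rw [abs, abs, smul_sup_of_pos hr, smul_neg]

lemma inf_smul_eq_zero {x y : E} (h : x ⊓ y = 0) {r : ℝ} (hr : 0 ≤ r) : x ⊓ r • y = 0 := by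
  have hy : 0 ≤ y := h ▸ inf_le_right
  have hle : r • y ≤ ⌈r⌉₊ • y := by
    rw [← Nat.cast_smul_eq_nsmul ℝ]; exact smul_le_smul_of_nonneg_right (Nat.le_ceil r) hy
  refine le_antisymm ?_ (le_inf (h ▸ inf_le_left) (smul_nonneg hr hy))
  exact (inf_le_inf_left x hle).trans_eq (inf_nsmul_eq_zero h _)

lemma InBand.smul {x p : E} (hp : InBand x p) {r : ℝ} (hr : 0 ≤ r) : InBand x (r • p) :=
  fun w hw => inf_smul_eq_zero (hp w hw) hr

end RieszSpace

section Functionals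

variable {E : Type*} [AddCommGroup E] [Lattice E] [Module ℝ E]

lemma OrderBddFn.add {φ ψ : E →ₗ[ℝ] ℝ} (hφ : OrderBddFn φ) (hψ : OrderBddFn ψ) :
    OrderBddFn (φ + ψ) := fun a b => by
  obtain ⟨M, hM⟩ := hφ a b
  obtain ⟨M', hM'⟩ := hψ a b
  exact ⟨M + M', fun x hax hxb =>
    (abs_add_le _ _).trans (add_le_add (hM x hax hxb) (hM' x hax hxb))⟩

lemma OrderBddFn.sub {φ ψ : E →ₗ[ℝ] ℝ} (hφ : OrderBddFn φ) (hψ : OrderBddFn ψ) :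
    OrderBddFn (φ - ψ) := fun a b => by
  obtain ⟨M, hM⟩ := hφ a b
  obtain ⟨M', hM'⟩ := hψ a b
  exact ⟨M + M', fun x hax hxb =>
    (abs_sub _ _).trans (add_le_add (hM x hax hxb) (hM' x hax hxb))⟩

lemma OrdContFn.sub {φ ψ : E →ₗ[ℝ] ℝ} (hφ : OrdContFn φ) (hψ : OrdContFn ψ) :
    OrdContFn (φ - ψ) := by
  intro s hne hdir hglb ε hε
  obtain ⟨d₁, hd₁, h₁⟩ := hφ s hne hdir hglb (ε / 2) (half_pos hε)
  obtain ⟨d₂, hd₂, h₂⟩ := hψ s hne hdir hglb (ε / 2) (half_pos hε)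
  obtain ⟨d, hd, hd₁d, hd₂d⟩ := hdir d₁ hd₁ d₂ hd₂
  refine ⟨d, hd, fun d' hd' hd'd => ?_⟩
  have := h₁ d' hd' (hd'd.trans hd₁d)
  have := h₂ d' hd' (hd'd.trans hd₂d)
  rw [LinearMap.sub_apply]
  linarith [abs_sub (φ d') (ψ d')]

lemma OrdContFn.of_nonneg_of_le {φ ψ : E →ₗ[ℝ] ℝ} (hψ : OrdContFn ψ)
    (h : ∀ x, 0 ≤ x → 0 ≤ φ x ∧ φ x ≤ ψ x) : OrdContFn φ := by
  intro s hne hdir hglb ε hε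
  obtain ⟨d, hd, hψd⟩ := hψ s hne hdir hglb ε hε
  refine ⟨d, hd, fun d' hd' hd'd => ?_⟩
  have h₀ := h d' (hglb.1 hd')
  have := hψd d' hd' hd'd
  rw [abs_of_nonneg h₀.1]
  linarith [le_abs_self (ψ d')]

variable [RieszSp E]

lemma exists_linearMap_eq_on_nonneg (p : E → ℝ)
    (hadd : ∀ u v : E, 0 ≤ u → 0 ≤ v → p (u + v) = p u + p v)
    (hsmul : ∀ (r : ℝ) (u : E), 0 ≤ r → 0 ≤ u → p (r • u) = r * p u) :
    ∃ ℓ : E →ₗ[ℝ] ℝ, ∀ u : E, 0 ≤ u → ℓ u = p u := by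
  set q : E → ℝ := fun u => p u⁺ - p u⁻
  have hq : ∀ x y : E, 0 ≤ x → 0 ≤ y → q (x - y) = p x - p y := by
    intro x y hx hy
    have h : (x - y)⁺ + y = x + (x - y)⁻ := sub_eq_sub_iff_add_eq_add.1 (posPart_sub_negPart _)
    have := congrArg p h
    rw [hadd _ _ (posPart_nonneg _) hy, hadd _ _ hx (negPart_nonneg _)] at this
    simp only [q]
    linarith
  have hq_pos : ∀ u : E, q u = p u⁺ - p u⁻ := fun _ => rfl
  have hp0 : p 0 = 0 := by simpa using hsmul 0 0 le_rfl le_rfl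
  refine ⟨{ toFun := q, map_add' := fun u v => ?_, map_smul' := fun r u => ?_ }, fun u hu => ?_⟩
  · have : u + v = (u⁺ + v⁺) - (u⁻ + v⁻) := by
      rw [add_sub_add_comm, posPart_sub_negPart, posPart_sub_negPart]
    rw [this, hq _ _ (add_nonneg (posPart_nonneg u) (posPart_nonneg v))
      (add_nonneg (negPart_nonneg u) (negPart_nonneg v)),
      hadd _ _ (posPart_nonneg u) (posPart_nonneg v),
      hadd _ _ (negPart_nonneg u) (negPart_nonneg v)]
    ring
  · change q (r • u) = r * q u
    rcases le_total 0 r with hr | hr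
    · have : r • u = r • u⁺ - r • u⁻ := by rw [← smul_sub, posPart_sub_negPart]
      rw [this, hq _ _ (smul_nonneg hr (posPart_nonneg u)) (smul_nonneg hr (negPart_nonneg u)),
        hsmul _ _ hr (posPart_nonneg u), hsmul _ _ hr (negPart_nonneg u), hq_pos]
      ring
    · have hr' : 0 ≤ -r := neg_nonneg.2 hr
      have : r • u = (-r) • u⁻ - (-r) • u⁺ := by
        rw [← smul_sub, neg_smul, ← smul_neg, neg_sub, posPart_sub_negPart]
      rw [this, hq _ _ (smul_nonneg hr' (negPart_nonneg u)) (smul_nonneg hr' (posPart_nonneg u)),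
        hsmul _ _ hr' (posPart_nonneg u), hsmul _ _ hr' (negPart_nonneg u), hq_pos]
      ring
  · simp [q, posPart_eq_self.2 hu, negPart_eq_zero.2 hu, hp0]

lemma orderBddFn_of_nonneg {φ : E →ₗ[ℝ] ℝ} (hφ : ∀ x, 0 ≤ x → 0 ≤ φ x) : OrderBddFn φ := by
  have hmono : ∀ x y : E, x ≤ y → φ x ≤ φ y := fun x y h => by
    simpa using hφ _ (sub_nonneg.2 h)
  refine fun a b => ⟨|φ a| + |φ b|, fun x hax hxb => abs_le.2 ⟨?_, ?_⟩⟩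
  · linarith [hmono _ _ hax, neg_abs_le (φ a), abs_nonneg (φ b)]
  · linarith [hmono _ _ hxb, le_abs_self (φ b), abs_nonneg (φ a)]

end Functionals

namespace FAlg

variable {R : Type*} [CommRing R] [Lattice R] [Module ℝ R] [FAlg R]

lemma mul_eq_zero_of_inf_eq_zero {a b : R} (h : a ⊓ b = 0) : a * b = 0 := by
  have ha : 0 ≤ a := h ▸ inf_le_left
  have hb : 0 ≤ b := h ▸ inf_le_right
  have hab : 0 ≤ a * b := mul_nonneg a b ha hb
  have hdisj : a * b ⊓ (a + b) = 0 := by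
    have h₁ : a * b ⊓ a = 0 := disjoint_mul b a a (by rwa [inf_comm]) ha
    have h₂ : a * b ⊓ b = 0 := by simpa only [mul_comm] using disjoint_mul a b b h hb
    refine le_antisymm ?_ (le_inf hab (add_nonneg ha hb))
    simpa [h₁, h₂] using inf_add_le_inf_add_inf hab ha hb
  have hsq : a * b ≤ (a + b) * (a + b) := by
    have : (a + b) * (a + b) - a * b = a * a + a * b + b * b := by ring
    rw [← sub_nonneg, this]
    exact add_nonneg (add_nonneg (mul_nonneg a a ha ha) hab) (mul_nonneg b b hb hb)
  calc a * b = a * b ⊓ ((a + b) * (a + b)) := (inf_eq_left.2 hsq).symm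
    _ = 0 := by rw [inf_comm]; exact disjoint_mul _ _ _ (by rwa [inf_comm]) (add_nonneg ha hb)

lemma one_nonneg : (0 : R) ≤ 1 := by
  have h : (1 : R)⁻ * 1⁺ = 0 := by
    rw [mul_comm]; exact mul_eq_zero_of_inf_eq_zero (posPart_inf_negPart_eq_zero 1)
  have : (1 : R)⁻ = (1 : R)⁻ * ((1 : R)⁺ - (1 : R)⁻) := by rw [posPart_sub_negPart, mul_one]
  rw [mul_sub, h, zero_sub] at this
  have hneg : (1 : R)⁻ = 0 :=
    le_antisymm (this ▸ neg_nonpos.2 (mul_nonneg _ _ (negPart_nonneg 1) (negPart_nonneg 1)))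
      (negPart_nonneg 1)
  rw [← posPart_sub_negPart (1 : R), hneg, sub_zero]
  exact posPart_nonneg 1

lemma nsmul_posPart_sub_le_mul_self {G : R} (hG : 0 ≤ G) (n : ℕ) :
    n • (G - n • 1)⁺ ≤ G * G := by
  have hu : 0 ≤ (G - n • 1)⁺ := posPart_nonneg _
  have huG : (G - n • 1)⁺ ≤ G :=
    (posPart_mono (sub_le_self G (nsmul_nonneg one_nonneg n))).trans_eq (posPart_eq_self.2 hG)
  have hsq : ∀ v : R, v⁺ * v = v⁺ * v⁺ := fun v => by
    calc v⁺ * v = v⁺ * (v⁺ - v⁻) := by rw [posPart_sub_negPart]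
      _ = v⁺ * v⁺ := by rw [mul_sub, mul_eq_zero_of_inf_eq_zero (posPart_inf_negPart_eq_zero v),
          sub_zero]
  calc n • (G - n • 1)⁺ = (G - n • 1)⁺ * (n • 1) := by rw [mul_smul_comm, mul_one]
    _ ≤ (G - n • 1)⁺ * G := by
        rw [← sub_nonneg, ← mul_sub, hsq]; exact mul_nonneg _ _ hu hu
    _ ≤ G * G := by
        rw [← sub_nonneg, ← sub_mul]; exact mul_nonneg _ _ (sub_nonneg.2 huG) hG

end FAlg

section OrderContinuity

variable {E : Type*} [AddCommGroup E] [Lattice E] [Module ℝ E] [RieszSp E] {T : E →ₗ[ℝ] E}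

def eventualBounds (T : E →ₗ[ℝ] E) (s : Set E) : Set E :=
  {w | ∃ d ∈ s, ∀ d' ∈ s, d' ≤ d → |T d'| ≤ w}

lemma abs_apply_le_smul {u V : E} (hV : ∀ x, 0 ≤ x → x ≤ u → |T x| ≤ V) {r : ℝ} (hr : 0 < r)
    {x : E} (hx : 0 ≤ x) (hxu : x ≤ r • u) : |T x| ≤ r • V := by
  have h := hV (r⁻¹ • x) (smul_nonneg (inv_nonneg.2 hr.le) hx) ((inv_smul_le_iff_of_pos hr).2 hxu)
  rwa [map_smul, abs_smul_of_nonneg (inv_nonneg.2 hr.le), inv_smul_le_iff_of_pos hr] at h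

lemma posPart_sub_inf_posPart_sub_eq_zero (harch : IsArchimedeanRiesz E)
    (hbp : ∀ x σ : E, x ⊓ σ = 0 → |T x| ⊓ σ = 0) {s : Set E} (hs : IsGLB s 0) {u V e : E}
    (hV : ∀ x, 0 ≤ x → x ≤ u → |T x| ≤ V) (he : ∀ w ∈ eventualBounds T s, e ≤ w)
    {r : ℝ} (hr : 0 < r) {β : E} (hβ : β ∈ s) (hβu : β ≤ u) :
    (e - r • V)⁺ ⊓ (r • u - β)⁺ = 0 := by
  set c := (e - r • V)⁺ ⊓ (r • u - β)⁺
  have hu : 0 ≤ u := (hs.1 hβ).trans hβu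
  have hV₀ : 0 ≤ V := by simpa using hV 0 le_rfl hu
  refine harch.eq_zero_of_le_sub_inf (le_inf (posPart_nonneg _) (posPart_nonneg _)) hV₀ fun n => ?_
  -- below `β`, split `d'` into a part below `r u` and a part disjoint from `c`
  have hw : r • V + (V - V ⊓ n • c) ∈ eventualBounds T s := by
    refine ⟨β, hβ, fun d' hd' hd'β => ?_⟩
    have hd' : 0 ≤ d' := hs.1 hd'
    have hlow : |T (d' ⊓ r • u)| ≤ r • V :=
      abs_apply_le_smul hV hr (le_inf hd' (smul_nonneg hr.le hu)) inf_le_right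
    have hdisj : (d' - r • u)⁺ ⊓ c = 0 := by
      refine le_antisymm ?_
        (le_inf (posPart_nonneg _) (le_inf (posPart_nonneg _) (posPart_nonneg _)))
      calc (d' - r • u)⁺ ⊓ c ≤ (β - r • u)⁺ ⊓ (β - r • u)⁻ := by
            rw [← posPart_neg, neg_sub]
            exact inf_le_inf (posPart_mono (sub_le_sub_right hd'β _)) inf_le_right
        _ = 0 := posPart_inf_negPart_eq_zero _
    have hhigh : |T (d' - r • u)⁺| ≤ V - V ⊓ n • c := by
      refine le_sub_inf_of_inf_eq_zero (hV _ (posPart_nonneg _) ?_)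
        (inf_nsmul_eq_zero (hbp _ _ hdisj) n)
      exact (sup_le (sub_le_self d' (smul_nonneg hr.le hu)) hd').trans (hd'β.trans hβu)
    calc |T d'| = |T (d' ⊓ r • u) + T (d' - r • u)⁺| := by
          rw [← map_add, inf_eq_sub_posPart_sub, sub_add_cancel]
      _ ≤ r • V + (V - V ⊓ n • c) := (abs_add_le _ _).trans (add_le_add hlow hhigh)
  calc c ≤ (e - r • V)⁺ := inf_le_left
    _ ≤ V - V ⊓ n • c := sup_le (sub_le_iff_le_add'.2 (he _ hw)) (sub_nonneg.2 inf_le_left)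

lemma inf_eq_zero_of_forall_le_eventualBounds (harch : IsArchimedeanRiesz E)
    (hbp : ∀ x σ : E, x ⊓ σ = 0 → |T x| ⊓ σ = 0) {s : Set E} (hdir : DirectedOn (· ≥ ·) s)
    (hs : IsGLB s 0) {u V e : E} (hu : u ∈ s) (hV : ∀ x, 0 ≤ x → x ≤ u → |T x| ≤ V)
    (he₀ : 0 ≤ e) (he : ∀ w ∈ eventualBounds T s, e ≤ w) : e ⊓ u = 0 := by
  have hu₀ : 0 ≤ u := hs.1 hu
  have hV₀ : 0 ≤ V := by simpa using hV 0 le_rfl hu₀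
  refine le_antisymm (harch _ V fun n => ?_) (le_inf he₀ hu₀)
  rcases n.eq_zero_or_pos with rfl | hn
  · simpa using hV₀
  set r : ℝ := (n : ℝ)⁻¹
  have hr : 0 < r := inv_pos.2 (Nat.cast_pos.2 hn)
  set g := (e - r • V)⁺
  -- `g ⊓ r u` lies below every element of `s`
  have hgru : g ⊓ r • u = 0 := by
    refine le_antisymm (hs.2 fun β' hβ' => ?_) (le_inf (posPart_nonneg _) (smul_nonneg hr.le hu₀))
    obtain ⟨β, hβ, hβ'β, huβ⟩ := hdir β' hβ' u hu
    calc g ⊓ r • u ≤ g ⊓ ((r • u - β)⁺ + β) :=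
          inf_le_inf_left g (sub_le_iff_le_add.1 (le_posPart _))
      _ ≤ g ⊓ (r • u - β)⁺ + g ⊓ β :=
          inf_add_le_inf_add_inf (posPart_nonneg _) (posPart_nonneg _) (hs.1 hβ)
      _ ≤ β' := by
          rw [posPart_sub_inf_posPart_sub_eq_zero harch hbp hs hV he hr hβ huβ, zero_add]
          exact inf_le_right.trans hβ'β
  have hgu : g ⊓ u = 0 := by
    simpa [smul_smul, inv_mul_cancel₀ hr.ne'] using inf_smul_eq_zero hgru (inv_nonneg.2 hr.le)
  have hle : e ⊓ u ≤ r • V :=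
    calc e ⊓ u ≤ u ⊓ (g + r • V) := by
          rw [inf_comm]; exact inf_le_inf_left u (sub_le_iff_le_add.1 (le_posPart _))
      _ ≤ u ⊓ g + u ⊓ r • V := inf_add_le_inf_add_inf hu₀ (posPart_nonneg _) (smul_nonneg hr.le hV₀)
      _ ≤ r • V := by rw [inf_comm u g, hgu, zero_add]; exact inf_le_right
  calc n • (e ⊓ u) ≤ n • (r • V) := nsmul_le_nsmul_right hle n
    _ = V := by
        rw [← Nat.cast_smul_eq_nsmul ℝ, smul_smul, mul_inv_cancel₀ (Nat.cast_pos.2 hn).ne',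
          one_smul]

lemma isGLB_eventualBounds (harch : IsArchimedeanRiesz E)
    (hbp : ∀ x σ : E, x ⊓ σ = 0 → |T x| ⊓ σ = 0)
    (hbdd : ∀ u : E, 0 ≤ u → ∃ V, ∀ x, 0 ≤ x → x ≤ u → |T x| ≤ V) {s : Set E}
    (hne : s.Nonempty) (hdir : DirectedOn (· ≥ ·) s) (hs : IsGLB s 0) :
    IsGLB (eventualBounds T s) 0 := by
  refine ⟨fun w ⟨d, hd, hdw⟩ => (abs_nonneg _).trans (hdw d hd le_rfl), fun e he => ?_⟩
  have he' : ∀ w ∈ eventualBounds T s, e ⊔ 0 ≤ w := fun w hw =>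
    sup_le (he hw) (let ⟨d, hd, hdw⟩ := hw; (abs_nonneg _).trans (hdw d hd le_rfl))
  -- `e ⊔ 0` is disjoint from `s`, hence from every `|T d'|`, and so lies below `V - V ⊓ n (e ⊔ 0)`
  have hdisj : ∀ d ∈ s, d ⊓ (e ⊔ 0) = 0 := fun d hd => by
    obtain ⟨V, hV⟩ := hbdd d (hs.1 hd)
    rw [inf_comm]
    exact inf_eq_zero_of_forall_le_eventualBounds harch hbp hdir hs hd hV le_sup_right he'
  obtain ⟨d₀, hd₀⟩ := hne
  obtain ⟨V, hV⟩ := hbdd d₀ (hs.1 hd₀)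
  have hV₀ : 0 ≤ V := by simpa using hV 0 le_rfl (hs.1 hd₀)
  refine le_sup_left.trans (le_of_eq (harch.eq_zero_of_le_sub_inf le_sup_right hV₀ fun n => ?_))
  exact he' _ ⟨d₀, hd₀, fun d' hd' hd'd₀ => le_sub_inf_of_inf_eq_zero (hV d' (hs.1 hd') hd'd₀)
    (inf_nsmul_eq_zero (hbp _ _ (hdisj d' hd')) n)⟩

omit [RieszSp E] in
lemma directedOn_eventualBounds {s : Set E} (hdir : DirectedOn (· ≥ ·) s) :
    DirectedOn (· ≥ ·) (eventualBounds T s) := by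
  rintro w₁ ⟨d₁, hd₁, h₁⟩ w₂ ⟨d₂, hd₂, h₂⟩
  obtain ⟨d, hd, hd₁d, hd₂d⟩ := hdir d₁ hd₁ d₂ hd₂
  exact ⟨w₁ ⊓ w₂, ⟨d, hd, fun d' hd' hd'd =>
    le_inf (h₁ d' hd' (hd'd.trans hd₁d)) (h₂ d' hd' (hd'd.trans hd₂d))⟩, inf_le_left, inf_le_right⟩

lemma ordContFn_comp (harch : IsArchimedeanRiesz E)
    (hbp : ∀ x σ : E, x ⊓ σ = 0 → |T x| ⊓ σ = 0)
    (hbdd : ∀ u : E, 0 ≤ u → ∃ V, ∀ x, 0 ≤ x → x ≤ u → |T x| ≤ V) {φ ψ : E →ₗ[ℝ] ℝ}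
    (hψ : OrdContFn ψ) (hψ₀ : ∀ x, 0 ≤ x → 0 ≤ ψ x) (hφψ : ∀ x, |φ x| ≤ ψ |x|) :
    OrdContFn (φ ∘ₗ T) := by
  intro s hne hdir hglb ε hε
  have hne' : (eventualBounds T s).Nonempty := by
    obtain ⟨d, hd⟩ := hne
    obtain ⟨V, hV⟩ := hbdd d (hglb.1 hd)
    exact ⟨V, d, hd, fun d' hd' hd'd => hV d' (hglb.1 hd') hd'd⟩
  obtain ⟨w, ⟨d, hd, hdw⟩, hwε⟩ := hψ _ hne' (directedOn_eventualBounds hdir)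
    (isGLB_eventualBounds harch hbp hbdd hne hdir hglb) ε hε
  refine ⟨d, hd, fun d' hd' hd'd => ?_⟩
  calc |(φ ∘ₗ T) d'| ≤ ψ |T d'| := hφψ _
    _ ≤ ψ w := by simpa using hψ₀ _ (sub_nonneg.2 (hdw d' hd' hd'd))
    _ < ε := (le_abs_self _).trans_lt (hwε w ⟨d, hd, hdw⟩ le_rfl)

end OrderContinuity

namespace DualSetting

variable (P)

section Actions

omit [FAlg A] [RieszSp D] [FAlg N]

lemma dsmul_neg (a : A) (f : D) : P.dsmul a (-f) = -P.dsmul a f :=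
  P.dual_inj <| LinearMap.ext fun b => by simp [P.dsmul_eval]

lemma dsmul_sub (a : A) (f g : D) : P.dsmul a (f - g) = P.dsmul a f - P.dsmul a g :=
  P.dual_inj <| LinearMap.ext fun b => by simp [P.dsmul_eval]

lemma nsmul_neg_right (G : N) (f : D) : P.nsmul G (-f) = -P.nsmul G f :=
  P.dual_inj <| LinearMap.ext fun a => by simp [P.nsmul_eval, dsmul_neg]

lemma nsmul_add_left (G H : N) (f : D) : P.nsmul (G + H) f = P.nsmul G f + P.nsmul H f :=
  P.dual_inj <| LinearMap.ext fun a => by simp [P.nsmul_eval]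

lemma nsmul_nsmul_left (n : ℕ) (G : N) (f : D) : P.nsmul (n • G) f = n • P.nsmul G f :=
  P.dual_inj <| LinearMap.ext fun a => by
    simp only [P.nsmul_eval, map_nsmul, LinearMap.smul_apply]

end Actions

section Order

omit [FAlg A] [FAlg N]

lemma le_iff_dual_le {d e : D} : d ≤ e ↔ ∀ a : A, 0 ≤ a → P.dual d a ≤ P.dual e a := by
  rw [← sub_nonneg, P.dual_order]
  simp only [map_sub, LinearMap.sub_apply, sub_nonneg]

lemma dual_ext_nonneg {d e : D} (h : ∀ a : A, 0 ≤ a → P.dual d a = P.dual e a) : d = e :=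
  le_antisymm ((P.le_iff_dual_le).2 fun a ha => (h a ha).le)
    ((P.le_iff_dual_le).2 fun a ha => (h a ha).ge)

lemma bidual_mono {F : N} (hF : 0 ≤ F) {f g : D} (h : f ≤ g) : P.bidual F f ≤ P.bidual F g := by
  simpa using (P.bidual_order F).1 hF _ (sub_nonneg.2 h)

include P in
lemma isArchimedeanRiesz : IsArchimedeanRiesz D := fun c V h =>
  (P.le_iff_dual_le).2 fun a ha => by
    rw [map_zero, LinearMap.zero_apply]
    by_contra! hpos
    obtain ⟨n, hn⟩ := exists_nat_gt (P.dual V a / P.dual c a)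
    have := (P.le_iff_dual_le).1 (h n) a ha
    rw [map_nsmul, LinearMap.smul_apply, nsmul_eq_mul] at this
    rw [div_lt_iff₀ hpos] at hn
    linarith

end Order

omit [FAlg A] [RieszSp D] in
lemma le_iff_bidual_le {F G : N} : F ≤ G ↔ ∀ f : D, 0 ≤ f → P.bidual F f ≤ P.bidual G f := by
  rw [← sub_nonneg, P.bidual_order]
  simp only [map_sub, LinearMap.sub_apply, sub_nonneg]

omit [FAlg A] in
lemma abs_bidual_le (F : N) (f : D) : |P.bidual F f| ≤ P.bidual |F| |f| := by
  have key : ∀ G : N, 0 ≤ G → |P.bidual G f| ≤ P.bidual G |f| := fun G hG =>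
    abs_le.2 ⟨by simpa using P.bidual_mono hG (neg_le.1 (neg_le_abs f)),
      P.bidual_mono hG (le_abs_self f)⟩
  calc |P.bidual F f| = |P.bidual F⁺ f - P.bidual F⁻ f| := by
        rw [← LinearMap.sub_apply, ← map_sub, posPart_sub_negPart]
    _ ≤ P.bidual F⁺ |f| + P.bidual F⁻ |f| :=
        (abs_sub _ _).trans (add_le_add (key _ (posPart_nonneg F)) (key _ (negPart_nonneg F)))
    _ = P.bidual |F| |f| := by rw [← LinearMap.add_apply, ← map_add, posPart_add_negPart]

section

omit [FAlg N]

omit [RieszSp D] in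
lemma dsmul_nonneg {a : A} (ha : 0 ≤ a) {f : D} (hf : 0 ≤ f) : 0 ≤ P.dsmul a f :=
  (P.dual_order _).2 fun b hb => by
    rw [P.dsmul_eval]; exact (P.dual_order f).1 hf _ (FAlg.mul_nonneg a b ha hb)

lemma dsmul_mono {a : A} (ha : 0 ≤ a) {f g : D} (h : f ≤ g) : P.dsmul a f ≤ P.dsmul a g := by
  simpa [dsmul_sub] using P.dsmul_nonneg ha (sub_nonneg.2 h)

omit [RieszSp D] in
lemma nsmul_nonneg {G : N} (hG : 0 ≤ G) {f : D} (hf : 0 ≤ f) : 0 ≤ P.nsmul G f :=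
  (P.dual_order _).2 fun a ha => by
    rw [P.nsmul_eval]; exact (P.bidual_order G).1 hG _ (P.dsmul_nonneg ha hf)

lemma nsmul_mono_right {G : N} (hG : 0 ≤ G) {f g : D} (h : f ≤ g) :
    P.nsmul G f ≤ P.nsmul G g :=
  (P.le_iff_dual_le).2 fun a ha => by
    simp only [P.nsmul_eval]; exact P.bidual_mono hG (P.dsmul_mono ha h)

lemma exists_isLUB_dual_eq_iSup {S : Set D} (hne : S.Nonempty) (hdir : DirectedOn (· ≤ ·) S)
    (hbdd : BddAbove S) :
    ∃ z : D, IsLUB S z ∧ ∀ a : A, 0 ≤ a → P.dual z a = ⨆ y : S, P.dual y a := by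
  have := hne.to_subtype
  obtain ⟨B, hB⟩ := hbdd
  obtain ⟨y₀, hy₀⟩ := hne
  set p : A → ℝ := fun a => ⨆ y : S, P.dual y a
  have hp_bdd : ∀ a : A, 0 ≤ a → BddAbove (Set.range fun y : S => P.dual y a) := fun a ha =>
    ⟨P.dual B a, by rintro _ ⟨y, rfl⟩; exact (P.le_iff_dual_le).1 (hB y.2) a ha⟩
  have hle_p : ∀ a : A, 0 ≤ a → ∀ y ∈ S, P.dual y a ≤ p a := fun a ha y hy =>
    le_ciSup (hp_bdd a ha) ⟨y, hy⟩
  have hadd : ∀ u v : A, 0 ≤ u → 0 ≤ v → p (u + v) = p u + p v := by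
    intro u v hu hv
    refine le_antisymm (ciSup_le fun y => ?_) ?_
    · rw [map_add]
      exact add_le_add (hle_p u hu y y.2) (hle_p v hv y y.2)
    · -- directedness lets one bound `y₁ u + y₂ v` by a single `y₃ (u + v)`
      have h : ∀ y₁ y₂ : S, P.dual y₁ u + P.dual y₂ v ≤ p (u + v) := fun y₁ y₂ => by
        obtain ⟨y₃, hy₃, h₁, h₂⟩ := hdir y₁ y₁.2 y₂ y₂.2
        calc P.dual y₁ u + P.dual y₂ v ≤ P.dual y₃ u + P.dual y₃ v :=
              add_le_add ((P.le_iff_dual_le).1 h₁ u hu) ((P.le_iff_dual_le).1 h₂ v hv)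
          _ ≤ p (u + v) := by rw [← map_add]; exact hle_p _ (add_nonneg hu hv) y₃ hy₃
      have h' : ∀ y₂ : S, p u + P.dual y₂ v ≤ p (u + v) := fun y₂ =>
        le_sub_iff_add_le.1 (ciSup_le fun y₁ => le_sub_iff_add_le.2 (h y₁ y₂))
      exact le_sub_iff_add_le'.1 (ciSup_le fun y₂ => le_sub_iff_add_le'.2 (h' y₂))
  have hsmul : ∀ (r : ℝ) (u : A), 0 ≤ r → 0 ≤ u → p (r • u) = r * p u := fun r u hr _ => by
    simp only [p, map_smul, smul_eq_mul, Real.mul_iSup_of_nonneg hr]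
  obtain ⟨ℓ, hℓ⟩ := exists_linearMap_eq_on_nonneg p hadd hsmul
  have hℓ_bdd : OrderBddFn ℓ := by
    simpa using (orderBddFn_of_nonneg (φ := ℓ - P.dual y₀) fun a ha => by
      simpa [hℓ a ha] using hle_p a ha y₀ hy₀).add (P.dual_bdd y₀)
  obtain ⟨z, hz⟩ := P.dual_surj ℓ hℓ_bdd
  have hz_eq : ∀ a : A, 0 ≤ a → P.dual z a = p a := fun a ha => by rw [hz, hℓ a ha]
  refine ⟨z, ⟨fun y hy => ?_, fun w hw => ?_⟩, hz_eq⟩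
  · exact (P.le_iff_dual_le).2 fun a ha => (hz_eq a ha).symm ▸ hle_p a ha y hy
  · exact (P.le_iff_dual_le).2 fun a ha =>
      (hz_eq a ha).symm ▸ ciSup_le fun y => (P.le_iff_dual_le).1 (hw y.2) a ha

open Pointwise in
lemma exists_dual_lt_of_isGLB {s : Set D} (hne : s.Nonempty) (hdir : DirectedOn (· ≥ ·) s)
    (hglb : IsGLB s 0) {a : A} (ha : 0 ≤ a) {ε : ℝ} (hε : 0 < ε) : ∃ d ∈ s, P.dual d a < ε := by
  have hdir' : DirectedOn (· ≤ ·) (-s) := fun x hx y hy => by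
    obtain ⟨w, hw, hxw, hyw⟩ := hdir (-x) hx (-y) hy
    exact ⟨-w, by simpa using hw, le_neg_of_le_neg hxw, le_neg_of_le_neg hyw⟩
  have hlub : IsLUB (-s) 0 := by simpa using hglb.neg
  obtain ⟨z, hz, hz_eq⟩ := P.exists_isLUB_dual_eq_iSup hne.neg hdir' hlub.bddAbove
  have hsup : (⨆ y : (-s : Set D), P.dual y a) = 0 := by
    rw [← hz_eq a ha, hz.unique hlub, map_zero, LinearMap.zero_apply]
  have := hne.neg.to_subtype
  obtain ⟨⟨y, hy⟩, hlt⟩ := exists_lt_of_lt_ciSup (hsup ▸ neg_lt_zero.2 hε)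
  exact ⟨-y, hy, by simpa [neg_lt] using hlt⟩

lemma exists_bidual_eq_flip (a : A) : ∃ G : N, P.bidual G = P.dual.flip a := by
  have hpos : ∀ b : A, 0 ≤ b → OrderBddFn (P.dual.flip b) ∧ OrdContFn (P.dual.flip b) := by
    intro b hb
    refine ⟨orderBddFn_of_nonneg fun f hf => (P.dual_order f).1 hf b hb, ?_⟩
    intro s hne hdir hglb ε hε
    obtain ⟨d, hd, hlt⟩ := P.exists_dual_lt_of_isGLB hne hdir hglb hb hε
    refine ⟨d, hd, fun d' hd' hd'd => ?_⟩
    rw [LinearMap.flip_apply, abs_of_nonneg ((P.dual_order d').1 (hglb.1 hd') b hb)]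
    exact ((P.le_iff_dual_le).1 hd'd b hb).trans_lt hlt
  have hsplit : P.dual.flip a = P.dual.flip a⁺ - P.dual.flip a⁻ := by
    rw [← map_sub, posPart_sub_negPart]
  obtain ⟨h₁, h₂⟩ := hpos _ (posPart_nonneg a)
  obtain ⟨h₃, h₄⟩ := hpos _ (negPart_nonneg a)
  exact P.bidual_surj _ (hsplit ▸ h₁.sub h₃) (hsplit ▸ h₂.sub h₄)

def embed (a : A) : N := (P.exists_bidual_eq_flip a).choose

lemma bidual_embed (a : A) (f : D) : P.bidual (P.embed a) f = P.dual f a := by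
  rw [embed, (P.exists_bidual_eq_flip a).choose_spec, LinearMap.flip_apply]

lemma embed_nonneg {a : A} (ha : 0 ≤ a) : 0 ≤ P.embed a :=
  (P.bidual_order _).2 fun f hf => by rw [bidual_embed]; exact (P.dual_order f).1 hf a ha

lemma nsmul_embed (a : A) (f : D) : P.nsmul (P.embed a) f = P.dsmul a f :=
  P.dual_inj <| LinearMap.ext fun b => by
    rw [P.nsmul_eval, bidual_embed, P.dsmul_eval, P.dsmul_eval, mul_comm]

lemma nsmul_one (f : D) : P.nsmul 1 f = f :=
  P.dual_inj <| LinearMap.ext fun a => by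
    rw [← bidual_embed, ← P.mul_eval, mul_one, bidual_embed]

include P in
lemma exists_isLUB_inf_nsmul (x g : D) :
    ∃ q : D, IsLUB (Set.range fun n : ℕ => g ⊓ n • x⁺) q := by
  have hmono : Monotone fun n : ℕ => g ⊓ n • x⁺ := fun m n hmn =>
    inf_le_inf_left g (nsmul_le_nsmul_left (posPart_nonneg x) hmn)
  obtain ⟨q, hq, -⟩ := P.exists_isLUB_dual_eq_iSup (Set.range_nonempty _)
    hmono.directed_le.directedOn_range ⟨g, by rintro _ ⟨n, rfl⟩; exact inf_le_left⟩
  exact ⟨q, hq⟩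

/-- The band projection of `g` onto the band generated by `x`: `sup_n (g ⊓ n x⁺)`. -/
def bandProj (x g : D) : D := (P.exists_isLUB_inf_nsmul x g).choose

lemma isLUB_bandProj (x g : D) :
    IsLUB (Set.range fun n : ℕ => g ⊓ n • x⁺) (P.bandProj x g) :=
  (P.exists_isLUB_inf_nsmul x g).choose_spec

lemma bandProj_le (x g : D) : P.bandProj x g ≤ g :=
  (P.isLUB_bandProj x g).2 <| by rintro _ ⟨n, rfl⟩; exact inf_le_left

lemma bandProj_nonneg (x : D) {g : D} (hg : 0 ≤ g) : 0 ≤ P.bandProj x g := by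
  simpa [inf_eq_right.2 hg] using (P.isLUB_bandProj x g).1 ⟨0, rfl⟩

lemma inBand_bandProj {x g : D} (hg : 0 ≤ g) : InBand x (P.bandProj x g) := fun w hw => by
  have hx : 0 ≤ x := hw ▸ inf_le_right
  refine inf_eq_zero_of_isLUB (Set.range_nonempty _) ?_ (P.isLUB_bandProj x g)
  rintro _ ⟨n, rfl⟩
  refine le_antisymm ?_
    (le_inf (hw ▸ inf_le_left) (le_inf hg (_root_.nsmul_nonneg (posPart_nonneg x) n)))
  rw [posPart_eq_self.2 hx, ← inf_nsmul_eq_zero hw n]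
  exact inf_le_inf_left w inf_le_right

lemma sub_bandProj_inf_eq_zero {x : D} (hx : 0 ≤ x) (g : D) :
    (g - P.bandProj x g) ⊓ x = 0 := by
  set q := P.bandProj x g
  have hq := P.isLUB_bandProj x g
  simp only [posPart_eq_self.2 hx] at hq
  set t := (g - q) ⊓ x
  -- `t + g ⊓ n x` lies below both `g` and `(n + 1) x`, hence below `q`
  have hstep : ∀ n : ℕ, g ⊓ n • x ≤ q - t := fun n => by
    refine le_sub_iff_add_le'.2 ((le_inf ?_ ?_).trans (hq.1 ⟨n + 1, rfl⟩))
    · calc t + g ⊓ n • x ≤ (g - q) + q := add_le_add inf_le_left (hq.1 ⟨n, rfl⟩)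
        _ = g := sub_add_cancel g q
    · rw [succ_nsmul, add_comm (n • x)]
      exact add_le_add inf_le_right inf_le_right
  have : q ≤ q - t := hq.2 <| by rintro _ ⟨n, rfl⟩; exact hstep n
  exact le_antisymm (by simpa using this) (le_inf (sub_nonneg.2 (P.bandProj_le x g)) hx)

lemma bandProj_eq {x g p : D} (hp : InBand x p) (hp₀ : 0 ≤ p) (hpg : p ≤ g)
    (hpx : (g - p) ⊓ x = 0) : P.bandProj x g = p := by
  have hx : 0 ≤ x := hpx ▸ inf_le_right
  have hg : 0 ≤ g := hp₀.trans hpg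
  exact (P.inBand_bandProj hg).eq_of_sub_inf_eq_zero hp (P.bandProj_nonneg x hg) hp₀
    (P.bandProj_le x g) hpg (P.sub_bandProj_inf_eq_zero hx g) hpx

lemma bandProj_add {x f g : D} (hx : 0 ≤ x) (hf : 0 ≤ f) (hg : 0 ≤ g) :
    P.bandProj x (f + g) = P.bandProj x f + P.bandProj x g := by
  have hf' := P.bandProj_nonneg x hf
  have hg' := P.bandProj_nonneg x hg
  refine P.bandProj_eq ((P.inBand_bandProj hf).add (P.inBand_bandProj hg) hf' hg')
    (add_nonneg hf' hg') (add_le_add (P.bandProj_le x f) (P.bandProj_le x g)) ?_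
  rw [add_sub_add_comm]
  refine le_antisymm ?_ (le_inf (add_nonneg (sub_nonneg.2 (P.bandProj_le x f))
    (sub_nonneg.2 (P.bandProj_le x g))) hx)
  rw [inf_comm]
  simpa [inf_comm x, P.sub_bandProj_inf_eq_zero hx f, P.sub_bandProj_inf_eq_zero hx g] using
    inf_add_le_inf_add_inf hx (sub_nonneg.2 (P.bandProj_le x f)) (sub_nonneg.2 (P.bandProj_le x g))

lemma bandProj_smul {x g : D} (hx : 0 ≤ x) (hg : 0 ≤ g) {r : ℝ} (hr : 0 ≤ r) :
    P.bandProj x (r • g) = r • P.bandProj x g := by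
  refine P.bandProj_eq ((P.inBand_bandProj hg).smul hr) (smul_nonneg hr (P.bandProj_nonneg x hg))
    (smul_le_smul_of_nonneg_left (P.bandProj_le x g) hr) ?_
  rw [← smul_sub, inf_comm]
  exact inf_smul_eq_zero (by rw [inf_comm]; exact P.sub_bandProj_inf_eq_zero hx g) hr

end

lemma nsmul_mono_left {G H : N} (h : G ≤ H) {f : D} (hf : 0 ≤ f) :
    P.nsmul G f ≤ P.nsmul H f :=
  (P.le_iff_dual_le).2 fun a ha => by
    simp only [P.nsmul_eval]; exact (P.le_iff_bidual_le).1 h _ (P.dsmul_nonneg ha hf)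

lemma nsmul_inf_eq_zero {G : N} (hG : 0 ≤ G) {x σ : D} (h : x ⊓ σ = 0) :
    P.nsmul G x ⊓ σ = 0 := by
  have hx : 0 ≤ x := h ▸ inf_le_left
  have hσ : 0 ≤ σ := h ▸ inf_le_right
  have ht : 0 ≤ P.nsmul G x ⊓ σ := le_inf (P.nsmul_nonneg hG hx) hσ
  refine le_antisymm (P.isArchimedeanRiesz _ (P.nsmul (G * G) x) fun n => ?_) ht
  -- split `G` at height `n`: the part below `n` keeps `x` disjoint from `σ`,
  -- the part above `n` is at most `G² / n`
  have hGn : 0 ≤ G ⊓ n • 1 := le_inf hG (_root_.nsmul_nonneg FAlg.one_nonneg n)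
  have hlow : P.nsmul (G ⊓ n • 1) x ⊓ σ = 0 := by
    have hle : P.nsmul (G ⊓ n • 1) x ≤ n • x := by
      have := P.nsmul_mono_left (inf_le_right : G ⊓ n • 1 ≤ n • 1) hx
      rwa [P.nsmul_nsmul_left, P.nsmul_one] at this
    refine le_antisymm ?_ (le_inf (P.nsmul_nonneg hGn hx) hσ)
    calc _ ≤ n • x ⊓ σ := inf_le_inf_right σ hle
      _ = 0 := by rw [inf_comm]; exact inf_nsmul_eq_zero (by rwa [inf_comm]) n
  have hhigh : P.nsmul G x ⊓ σ ≤ P.nsmul (G - n • 1)⁺ x := by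
    refine le_of_le_add_of_inf_eq_zero (P.nsmul_nonneg (posPart_nonneg _) hx) ?_ inf_le_right hlow
    rw [← P.nsmul_add_left, inf_eq_sub_posPart_sub G, sub_add_cancel]
    exact inf_le_left
  calc n • (P.nsmul G x ⊓ σ) ≤ n • P.nsmul (G - n • 1)⁺ x := nsmul_le_nsmul_right hhigh n
    _ = P.nsmul (n • (G - n • 1)⁺) x := (P.nsmul_nsmul_left _ _ _).symm
    _ ≤ P.nsmul (G * G) x := P.nsmul_mono_left (FAlg.nsmul_posPart_sub_le_mul_self hG n) hx

/-- `E` is the band projection onto `{x}ᵈᵈ` followed by `1`, i.e. `g ↦ 1 (bandProj x g)` on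
positive `g`. -/
lemma exists_nsmul_eq_self_and_eq_zero {x σ : D} (h : x ⊓ σ = 0) :
    ∃ E : N, 0 ≤ E ∧ E ≤ 1 ∧ P.nsmul E x = x ∧ P.nsmul E σ = 0 := by
  have hx : 0 ≤ x := h ▸ inf_le_left
  set p : D → ℝ := fun g => P.bidual 1 (P.bandProj x g)
  have hp : ∀ g : D, 0 ≤ g → 0 ≤ p g ∧ p g ≤ P.bidual 1 g := fun g hg =>
    ⟨(P.bidual_order 1).1 FAlg.one_nonneg _ (P.bandProj_nonneg x hg),
      P.bidual_mono FAlg.one_nonneg (P.bandProj_le x g)⟩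
  obtain ⟨ℓ, hℓ⟩ := exists_linearMap_eq_on_nonneg p
    (fun f g hf hg => by simp only [p, P.bandProj_add hx hf hg, map_add])
    (fun r g hr hg => by simp only [p, P.bandProj_smul hx hg hr, map_smul, smul_eq_mul])
  have hℓp : ∀ g : D, 0 ≤ g → 0 ≤ ℓ g ∧ ℓ g ≤ P.bidual 1 g := fun g hg => hℓ g hg ▸ hp g hg
  obtain ⟨E, hE⟩ := P.bidual_surj ℓ (orderBddFn_of_nonneg fun g hg => (hℓp g hg).1)
    (OrdContFn.of_nonneg_of_le (P.bidual_cont 1) hℓp)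
  have hE_eval : ∀ y : D, 0 ≤ y → ∀ a : A, 0 ≤ a →
      P.dual (P.nsmul E y) a = P.bidual 1 (P.bandProj x (P.dsmul a y)) := fun y hy a ha => by
    rw [P.nsmul_eval, hE, hℓ _ (P.dsmul_nonneg ha hy)]
  have hσ : 0 ≤ σ := h ▸ inf_le_right
  refine ⟨E, (P.bidual_order E).2 fun g hg => hE ▸ (hℓp g hg).1,
    (P.le_iff_bidual_le).2 fun g hg => hE ▸ (hℓp g hg).2,
    P.dual_ext_nonneg fun a ha => ?_, P.dual_ext_nonneg fun a ha => ?_⟩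
  · have hband : InBand x (P.dsmul a x) := fun w hw => by
      rw [inf_comm, ← P.nsmul_embed]
      exact P.nsmul_inf_eq_zero (P.embed_nonneg ha) (by rwa [inf_comm])
    rw [hE_eval x hx a ha, P.bandProj_eq hband (P.dsmul_nonneg ha hx) le_rfl (by simp [hx]),
      ← P.nsmul_eval, P.nsmul_one]
  · have hdisj : (P.dsmul a σ - 0) ⊓ x = 0 := by
      rw [sub_zero, ← P.nsmul_embed]
      exact P.nsmul_inf_eq_zero (P.embed_nonneg ha) (by rwa [inf_comm])
    rw [hE_eval σ hσ a ha, P.bandProj_eq (fun w hw => inf_eq_right.2 (hw ▸ inf_le_left)) le_rfl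
      (P.dsmul_nonneg ha hσ) hdisj]
    simp

lemma abs_apply_inf_eq_zero {T : D →ₗ[ℝ] D}
    (hlin : ∀ (G : N) (f : D), T (P.nsmul G f) = P.nsmul G (T f)) {x σ : D} (h : x ⊓ σ = 0) :
    |T x| ⊓ σ = 0 := by
  obtain ⟨E, hE₀, hE₁, hEx, hEσ⟩ := P.exists_nsmul_eq_self_and_eq_zero h
  have hTx : P.nsmul E (T x) = T x := by rw [← hlin, hEx]
  have hσ : 0 ≤ σ := h ▸ inf_le_right
  have hz : 0 ≤ |T x| ⊓ σ := le_inf (abs_nonneg _) hσ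
  have hE_abs : |T x| ≤ P.nsmul E |T x| := by
    refine sup_le ?_ ?_
    · calc T x = P.nsmul E (T x) := hTx.symm
        _ ≤ P.nsmul E |T x| := P.nsmul_mono_right hE₀ (le_abs_self _)
    · calc -T x = P.nsmul E (-T x) := by rw [P.nsmul_neg_right, hTx]
        _ ≤ P.nsmul E |T x| := P.nsmul_mono_right hE₀ (neg_le_abs _)
  -- `E` kills `|T x| ⊓ σ ≤ σ`, and `1 - E` kills `|T x| ⊓ σ ≤ |T x|`
  have hsplit : ∀ y : D, P.nsmul (1 - E) y + P.nsmul E y = y := fun y => by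
    rw [← P.nsmul_add_left, sub_add_cancel, P.nsmul_one]
  have h₁ : P.nsmul E (|T x| ⊓ σ) = 0 :=
    le_antisymm (hEσ ▸ P.nsmul_mono_right hE₀ inf_le_right) (P.nsmul_nonneg hE₀ hz)
  have h₂ : P.nsmul (1 - E) (|T x| ⊓ σ) = 0 := by
    refine le_antisymm ?_ (P.nsmul_nonneg (sub_nonneg.2 hE₁) hz)
    calc P.nsmul (1 - E) (|T x| ⊓ σ) ≤ P.nsmul (1 - E) |T x| :=
          P.nsmul_mono_right (sub_nonneg.2 hE₁) inf_le_left
      _ = |T x| - P.nsmul E |T x| := eq_sub_of_add_eq (hsplit _)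
      _ ≤ 0 := sub_nonpos.2 hE_abs
  rw [← hsplit (|T x| ⊓ σ), h₁, h₂, add_zero]

end DualSetting

lemma OrderBddOp.exists_abs_le {T : D →ₗ[ℝ] D} (hT : OrderBddOp T) (u : D) :
    ∃ V, ∀ x, 0 ≤ x → x ≤ u → |T x| ≤ V := by
  obtain ⟨l, v, h⟩ := hT 0 u
  exact ⟨v ⊔ -l, fun x hx hxu =>
    abs_le'.2 ⟨(h x hx hxu).2.trans le_sup_left, (neg_le_neg (h x hx hxu).1).trans le_sup_right⟩⟩

omit [RieszSp D] in
lemma OrderBddOp.orderBddFn_comp {T : D →ₗ[ℝ] D} (hT : OrderBddOp T) {φ : D →ₗ[ℝ] ℝ}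
    (hφ : OrderBddFn φ) : OrderBddFn (φ ∘ₗ T) := fun a b => by
  obtain ⟨l, v, h⟩ := hT a b
  obtain ⟨M, hM⟩ := hφ l v
  exact ⟨M, fun x hax hxb => hM _ (h x hax hxb).1 (h x hax hxb).2⟩

/-- The order adjoint of an order bounded f-linear operator satisfies
`G ⋅ T'(F) = T'(G ⋅ F)` for the Arens product on `(A^∼)^∼_n`. -/
theorem stmt12 (T : D →ₗ[ℝ] D) (hT : OrderBddOp T)
    (hlin : ∀ (G : N) (f : D), T (P.nsmul G f) = P.nsmul G (T f)) (F : N) :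
    ∃ F' : N, (∀ d : D, P.bidual F' d = P.bidual F (T d)) ∧
      ∀ G H : N, (∀ d : D, P.bidual H d = P.bidual (G * F) (T d)) →
        G * F' = H := by
  have hcont : OrdContFn (P.bidual F ∘ₗ T) :=
    ordContFn_comp P.isArchimedeanRiesz (fun _ _ h => P.abs_apply_inf_eq_zero hlin h)
      (fun u _ => hT.exists_abs_le u) (P.bidual_cont |F|)
      (fun x hx => (P.bidual_order _).1 (abs_nonneg F) x hx) (P.abs_bidual_le F)
  obtain ⟨F', hF'⟩ := P.bidual_surj _ (hT.orderBddFn_comp (P.bidual_bdd F)) hcont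
  refine ⟨F', fun d => by rw [hF']; rfl, fun G H hH => P.bidual_inj (LinearMap.ext fun f => ?_)⟩
  have hF'f : P.nsmul F' f = P.nsmul F (T f) := P.dual_inj <| LinearMap.ext fun a => by
    rw [P.nsmul_eval, P.nsmul_eval, hF', LinearMap.comp_apply, ← P.nsmul_embed, hlin,
      P.nsmul_embed]
  rw [P.mul_eval, hF'f, ← P.mul_eval, hH f]
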